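/- For every finite word ω = (ω_1,…,ω_m) over the restricted alphabet I_{n>1} = {(k,n) ∈ I : n > 1} and all z, w in the closed unit disk 𝔻, |φ'_ω(z)| ≤ 5.03661·|φ'_ω(w)|, where φ_ω = φ_{ω_1}∘⋯∘φ_{ω_m}. -/

import Mathlib

open Complex Metric Set
open scoped ENNReal

noncomputable section

/-- λ = √3 -/
def lam : ℝ := Real.sqrt 3

/-- The Möbius map f(z) = ((λ−1)z+1)/(−z+λ+1). -/
def apolF : ℂ → ℂ := fun z => (((lam : ℂ) - 1) * z + 1) / (-z + (lam : ℂ) + 1)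

/-- Rotation by angle θ. -/
def Rot (θ : ℝ) : ℂ → ℂ := fun z => Complex.exp ((θ : ℂ) * Complex.I) * z

/-- θ_k = (−1)^k · 2π/3 -/
def thetaA (k : ℕ) : ℝ := (-1 : ℝ) ^ k * (2 * Real.pi / 3)

/-- θ'_k = 2πk/3 -/
def thetaB (k : ℕ) : ℝ := 2 * Real.pi * k / 3

/-- The Apollonian generators φ_{k,n} = R_{θ'_k} ∘ f^n ∘ R_{θ_k} ∘ f. -/
def phi (k n : ℕ) : ℂ → ℂ := Rot (thetaB k) ∘ (apolF^[n]) ∘ Rot (thetaA k) ∘ apolF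

/-- The closed unit disk 𝔻. -/
def unitD : Set ℂ := Metric.closedBall (0 : ℂ) 1

/-- The Apollonian alphabet I = {1,…,6} × {1,2,3,…}. -/
def apolI : Set (ℕ × ℕ) := {p | 1 ≤ p.1 ∧ p.1 ≤ 6 ∧ 1 ≤ p.2}

/-- Composition φ_{ω₁}∘⋯∘φ_{ω_m} of a finite word ω = (ω₁,…,ω_m). -/
def wordComp (ω : List (ℕ × ℕ)) : ℂ → ℂ :=
  ω.foldr (fun p g => phi p.1 p.2 ∘ g) id

/-!
Every `φ_{k,n}` is a Möbius transformation, hence so is every `φ_ω`, say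
`z ↦ (a z + b) / (c z + d)`, with `φ_ω' z = (a d - b c) / (c z + d) ^ 2`. For `n ≥ 2` each
generator maps the closed disk of radius `R = 27/10` into itself without a pole there; this is
checked on its matrix by completing the square in the Hermitian form `R² ‖C z + D‖² - ‖A z + B‖²`,
the entries being polynomials in `n`, `λ = √3` and a primitive cube root of unity `u`. Hence
`φ_ω` has no pole in the `R`-disk, i.e. `R ‖c‖ ≤ ‖d‖`, and for `z, w ∈ 𝔻` this gives
`‖c w + d‖ / ‖c z + d‖ ≤ (R + 1) / (R - 1) = 37/17`, where `(37/17)² < 5.03661`.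
The radius is squeezed: the constant needs `R ≥ 2.61`, and the pole `λ + 1 ≈ 2.73` of `f` must
lie outside the `R`-disk.
-/

open ComplexConjugate Topology

def IsMobiusOn (s : Set ℂ) (g : ℂ → ℂ) : Prop :=
  ∃ a b c d : ℂ, a * d - b * c ≠ 0 ∧ ∀ z ∈ s, c * z + d ≠ 0 ∧ g z = (a * z + b) / (c * z + d)

lemma mul_norm_le_norm_of_forall_ne_zero {R : ℝ} {c d : ℂ}
    (h : ∀ z ∈ closedBall (0 : ℂ) R, c * z + d ≠ 0) : R * ‖c‖ ≤ ‖d‖ := by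
  by_contra! hlt
  have hc : c ≠ 0 := by
    rintro rfl
    rw [norm_zero, mul_zero] at hlt
    exact (norm_nonneg d).not_gt hlt
  refine h (-d / c) ?_ (by field_simp; ring)
  rw [mem_closedBall_zero_iff, norm_div, norm_neg, div_le_iff₀ (norm_pos_iff.mpr hc)]
  linarith

lemma mul_add_ne_zero_of_mul_norm_lt {c d z : ℂ} {R : ℝ} (h : R * ‖c‖ < ‖d‖) (hz : ‖z‖ ≤ R) :
    c * z + d ≠ 0 := by
  intro h0
  have h1 := norm_sub_norm_le d (-(c * z))
  rw [sub_neg_eq_add, add_comm, h0, norm_zero, norm_neg, norm_mul] at h1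
  nlinarith [norm_nonneg c]

lemma norm_mul_add_le {c d z : ℂ} (hz : z ∈ closedBall (0 : ℂ) 1) :
    ‖c * z + d‖ ≤ ‖c‖ + ‖d‖ := by
  rw [mem_closedBall_zero_iff] at hz
  calc ‖c * z + d‖ ≤ ‖c‖ * ‖z‖ + ‖d‖ := (norm_add_le _ _).trans (by rw [norm_mul])
    _ ≤ ‖c‖ + ‖d‖ := by gcongr; exact mul_le_of_le_one_right (norm_nonneg c) hz

lemma sub_le_norm_mul_add {c d z : ℂ} (hz : z ∈ closedBall (0 : ℂ) 1) :
    ‖d‖ - ‖c‖ ≤ ‖c * z + d‖ := by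
  have h := norm_mul_add_le (c := -c) (d := c * z + d) hz
  rw [norm_neg, show -c * z + (c * z + d) = d by ring] at h
  linarith

lemma hasDerivAt_mobius {a b c d z : ℂ} (hz : c * z + d ≠ 0) :
    HasDerivAt (fun w => (a * w + b) / (c * w + d)) ((a * d - b * c) / (c * z + d) ^ 2) z := by
  refine ((((hasDerivAt_id' z).const_mul a).add_const b).div
    (((hasDerivAt_id' z).const_mul c).add_const d) hz).congr_deriv ?_
  ring

lemma isMobiusOn_id (s : Set ℂ) : IsMobiusOn s id :=
  ⟨1, 0, 0, 1, by norm_num, fun z _ => ⟨by norm_num, by simp⟩⟩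

namespace IsMobiusOn

variable {s t : Set ℂ} {f g : ℂ → ℂ}

lemma comp (hf : IsMobiusOn t f) (hg : IsMobiusOn s g) (hst : MapsTo g s t) :
    IsMobiusOn s (f ∘ g) := by
  obtain ⟨a, b, c, d, hdet, hf⟩ := hf
  obtain ⟨a', b', c', d', hdet', hg⟩ := hg
  refine ⟨a * a' + b * c', a * b' + b * d', c * a' + d * c', c * b' + d * d', ?_, fun z hz => ?_⟩
  · have h : (a * a' + b * c') * (c * b' + d * d') - (a * b' + b * d') * (c * a' + d * c')
        = (a * d - b * c) * (a' * d' - b' * c') := by ring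
    rw [h]
    exact mul_ne_zero hdet hdet'
  obtain ⟨hpole', hgz⟩ := hg z hz
  obtain ⟨hpole, hfgz⟩ := hf (g z) (hst hz)
  rw [hgz] at hpole hfgz
  have hpush : ∀ p q : ℂ, p * ((a' * z + b') / (c' * z + d')) + q
      = ((p * a' + q * c') * z + (p * b' + q * d')) / (c' * z + d') := fun p q => by
    rw [mul_div_assoc', div_add' _ _ _ hpole']
    ring
  refine ⟨fun h => hpole (by rw [hpush, h, zero_div]), ?_⟩
  rw [Function.comp_apply, hgz, hfgz, hpush, hpush, div_div_div_cancel_right₀ hpole']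

lemma norm_deriv_le {R : ℝ} (hR : 1 < R) (hg : IsMobiusOn (closedBall 0 R) g)
    {z w : ℂ} (hz : z ∈ closedBall 0 1) (hw : w ∈ closedBall 0 1) :
    ‖deriv g z‖ ≤ ((R + 1) / (R - 1)) ^ 2 * ‖deriv g w‖ := by
  obtain ⟨a, b, c, d, hdet, hg⟩ := hg
  have hsub : closedBall (0 : ℂ) 1 ⊆ closedBall 0 R := closedBall_subset_closedBall hR.le
  have hderiv : ∀ x ∈ closedBall (0 : ℂ) 1, deriv g x = (a * d - b * c) / (c * x + d) ^ 2 := by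
    intro x hx
    have hnhds : closedBall (0 : ℂ) R ∈ 𝓝 x := Filter.mem_of_superset
      (isOpen_ball.mem_nhds (closedBall_subset_ball hR hx)) ball_subset_closedBall
    have heq : g =ᶠ[𝓝 x] fun y => (a * y + b) / (c * y + d) :=
      Filter.eventually_of_mem hnhds fun y hy => (hg y hy).2
    rw [heq.deriv_eq, (hasDerivAt_mobius (hg x (hsub hx)).1).deriv]
  have hP : 0 < ‖c * z + d‖ := norm_pos_iff.mpr (hg z (hsub hz)).1
  have hQ : 0 < ‖c * w + d‖ := norm_pos_iff.mpr (hg w (hsub hw)).1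
  have hcd : R * ‖c‖ ≤ ‖d‖ := mul_norm_le_norm_of_forall_ne_zero fun x hx => (hg x hx).1
  have hratio : ‖c * w + d‖ / ‖c * z + d‖ ≤ (R + 1) / (R - 1) := by
    rw [div_le_div_iff₀ hP (by linarith)]
    nlinarith [norm_mul_add_le (c := c) (d := d) hw, sub_le_norm_mul_add (c := c) (d := d) hz]
  rw [hderiv z hz, hderiv w hw, norm_div, norm_div, norm_pow, norm_pow]
  calc ‖a * d - b * c‖ / ‖c * z + d‖ ^ 2
      = (‖c * w + d‖ / ‖c * z + d‖) ^ 2 * (‖a * d - b * c‖ / ‖c * w + d‖ ^ 2) := by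
        field_simp
    _ ≤ ((R + 1) / (R - 1)) ^ 2 * (‖a * d - b * c‖ / ‖c * w + d‖ ^ 2) := by gcongr

end IsMobiusOn

/-- Completing the square in the Hermitian form `R² ‖C z + D‖² - ‖A z + B‖²`. -/
lemma mul_hermitian_form_eq (A B C D z : ℂ) (R : ℝ) :
    (R ^ 2 * ‖C‖ ^ 2 - ‖A‖ ^ 2) * (R ^ 2 * ‖C * z + D‖ ^ 2 - ‖A * z + B‖ ^ 2)
      = ‖((R ^ 2 * ‖C‖ ^ 2 - ‖A‖ ^ 2 : ℝ) : ℂ) * z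
          + conj ((R : ℂ) ^ 2 * C * conj D - A * conj B)‖ ^ 2
        - R ^ 2 * ‖A * D - B * C‖ ^ 2 := by
  apply Complex.ofReal_injective
  push_cast
  simp only [← Complex.mul_conj', map_add, map_sub, map_mul, map_pow, Complex.conj_ofReal,
    Complex.conj_conj]
  ring

lemma norm_mul_add_le_of_hermitian {A B C D z : ℂ} {R : ℝ}
    (hα : 0 < R ^ 2 * ‖C‖ ^ 2 - ‖A‖ ^ 2)
    (hb : R * (R ^ 2 * ‖C‖ ^ 2 - ‖A‖ ^ 2 + ‖A * D - B * C‖)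
      ≤ ‖(R : ℂ) ^ 2 * C * conj D - A * conj B‖)
    (hz : ‖z‖ ≤ R) : ‖A * z + B‖ ≤ R * ‖C * z + D‖ := by
  have hR : 0 ≤ R := (norm_nonneg z).trans hz
  set α := R ^ 2 * ‖C‖ ^ 2 - ‖A‖ ^ 2
  set b := (R : ℂ) ^ 2 * C * conj D - A * conj B
  have hnorm : R * ‖A * D - B * C‖ ≤ ‖(α : ℂ) * z + conj b‖ :=
    calc R * ‖A * D - B * C‖ ≤ ‖conj b‖ - α * ‖z‖ := by
          rw [Complex.norm_conj]; nlinarith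
      _ = ‖conj b‖ - ‖(α : ℂ) * z‖ := by
          rw [norm_mul, Complex.norm_real, Real.norm_of_nonneg hα.le]
      _ ≤ ‖(α : ℂ) * z + conj b‖ := by
          rw [add_comm]; exact norm_sub_le_norm_add _ _
  have hform : 0 ≤ R ^ 2 * ‖C * z + D‖ ^ 2 - ‖A * z + B‖ ^ 2 := by
    have h := mul_hermitian_form_eq A B C D z R
    have hsq : (R * ‖A * D - B * C‖) ^ 2 ≤ ‖(α : ℂ) * z + conj b‖ ^ 2 :=
      pow_le_pow_left₀ (by positivity) hnorm 2
    nlinarith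
  have hsq : ‖A * z + B‖ ^ 2 ≤ (R * ‖C * z + D‖) ^ 2 := by linarith [mul_pow R ‖C * z + D‖ 2]
  exact (pow_le_pow_iff_left₀ (norm_nonneg _) (by positivity) two_ne_zero).mp hsq

namespace IsPrimitiveRoot

variable {u : ℂ} (hu : IsPrimitiveRoot u 3)
include hu

lemma sq_add_self_add_one : u ^ 2 + u + 1 = 0 := by
  have h := hu.geom_sum_eq_zero (by norm_num)
  simp only [Finset.sum_range_succ, Finset.sum_range_zero] at h
  linear_combination h

lemma conj_eq_neg_one_sub : conj u = -1 - u := by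
  rw [← Complex.inv_eq_conj (hu.norm'_eq_one (by norm_num)), inv_eq_of_mul_eq_one_right
    (show u * (-1 - u) = 1 by linear_combination -hu.sq_add_self_add_one)]

end IsPrimitiveRoot

lemma isPrimitiveRoot_exp_thetaA (k : ℕ) : IsPrimitiveRoot (exp (thetaA k * I)) 3 := by
  have h : IsPrimitiveRoot (exp ((2 * Real.pi / 3 : ℝ) * I)) 3 := by
    convert Complex.isPrimitiveRoot_exp 3 (by norm_num) using 2
    push_cast
    ring
  rcases Nat.even_or_odd k with hk | hk
  · simpa [thetaA, hk.neg_one_pow] using h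
  · simpa [thetaA, hk.neg_one_pow, Complex.exp_neg] using h.inv

lemma lam_sq : lam ^ 2 = 3 := Real.sq_sqrt (by norm_num)

lemma lam_pos : 0 < lam := Real.sqrt_pos.mpr (by norm_num)

lemma lam_bounds : 173 / 100 ≤ lam ∧ lam ≤ 7 / 4 :=
  ⟨by nlinarith [lam_sq, lam_pos], by nlinarith [lam_sq, lam_pos]⟩

lemma ofReal_lam_sq : (lam : ℂ) ^ 2 = 3 := by
  rw [← Complex.ofReal_pow, lam_sq]
  norm_num

lemma apolF_div {p q : ℂ} (hq : q ≠ 0) :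
    apolF (p / q) = ((lam - 1) * p + q) / (-p + (lam + 1) * q) := by
  have hnum : ((lam : ℂ) - 1) * (p / q) + 1 = ((lam - 1) * p + q) / q := by
    rw [mul_div_assoc', div_add' _ _ _ hq, one_mul]
  have hden : -(p / q) + lam + 1 = (-p + (lam + 1) * q) / q := by
    rw [neg_div', add_assoc, div_add' _ _ _ hq]
  rw [apolF, hnum, hden, div_div_div_cancel_right₀ hq]

/-- The matrix of `f` is `λ + N` with `N = [[-1, 1], [-1, 1]]` nilpotent, so up to scaling the
matrix of `f^[n]` is `λ + n N`. -/
lemma apolF_iterate {n : ℕ} {w : ℂ} (hw : ∀ j ≤ n, -(j : ℂ) * w + lam + j ≠ 0) :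
    apolF^[n] w = ((lam - n) * w + n) / (-n * w + lam + n) := by
  have hlam : (lam : ℂ) ≠ 0 := Complex.ofReal_ne_zero.mpr lam_pos.ne'
  induction n with
  | zero => simp [hlam]
  | succ n ih =>
    rw [Function.iterate_succ_apply', ih fun j hj => hw j (hj.trans n.le_succ),
      apolF_div (hw n n.le_succ)]
    push_cast
    conv_rhs => rw [← mul_div_mul_left _ _ hlam]
    congr 1 <;> ring

/-- `[[apolA, apolB], [apolC, apolD]]` is the matrix of `z ↦ f^[n] (u * f z)`, namely
`[[λ - n, n], [-n, λ + n]] * [[u, 0], [0, 1]] * [[λ - 1, 1], [-1, λ + 1]]`. -/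
def apolA (u : ℂ) (n : ℕ) : ℂ := (lam - n) * (lam - 1) * u - n

def apolB (u : ℂ) (n : ℕ) : ℂ := (lam - n) * u + n * (lam + 1)

def apolC (u : ℂ) (n : ℕ) : ℂ := -(n * (lam - 1) * u) - (lam + n)

def apolD (u : ℂ) (n : ℕ) : ℂ := -(n * u) + (lam + n) * (lam + 1)

lemma apol_det (u : ℂ) (n : ℕ) : apolA u n * apolD u n - apolB u n * apolC u n = 9 * u := by
  simp only [apolA, apolB, apolC, apolD]
  grind [ofReal_lam_sq]

section CubeRoot

variable {u : ℂ} (hu : IsPrimitiveRoot u 3) (n : ℕ)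
include hu

lemma sq_norm_apolA :
    ‖apolA u n‖ ^ 2 = 12 - 6 * lam + n * (15 - 9 * lam) + n ^ 2 * (6 - 3 * lam) := by
  apply Complex.ofReal_injective
  push_cast
  rw [← Complex.mul_conj']
  simp only [apolA, map_sub, map_mul, map_natCast, Complex.conj_ofReal, map_one,
    hu.conj_eq_neg_one_sub]
  grind [hu.sq_add_self_add_one, ofReal_lam_sq]

lemma sq_norm_apolC :
    ‖apolC u n‖ ^ 2 = 3 + n * (3 * lam - 3) + n ^ 2 * (6 - 3 * lam) := by
  apply Complex.ofReal_injective
  push_cast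
  rw [← Complex.mul_conj']
  simp only [apolC, map_sub, map_mul, map_neg, map_add, map_natCast, Complex.conj_ofReal,
    map_one, hu.conj_eq_neg_one_sub]
  grind [hu.sq_add_self_add_one, ofReal_lam_sq]

lemma sq_norm_apolD :
    ‖apolD u n‖ ^ 2 = 12 + 6 * lam + n * (15 + 9 * lam) + n ^ 2 * (6 + 3 * lam) := by
  apply Complex.ofReal_injective
  push_cast
  rw [← Complex.mul_conj']
  simp only [apolD, map_mul, map_neg, map_add, map_natCast, Complex.conj_ofReal, map_one,
    hu.conj_eq_neg_one_sub]
  grind [hu.sq_add_self_add_one, ofReal_lam_sq]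

lemma sq_norm_apol_cross :
    ‖((27 / 10 : ℝ) : ℂ) ^ 2 * apolC u n * conj (apolD u n) - apolA u n * conj (apolB u n)‖ ^ 2
      = 5529069/2500 + 32798583/10000 * n + 4544919/1250 * n ^ 2 + 3560769/5000 * n ^ 3
        + 3560769/10000 * n ^ 4
        + lam * (4692969/5000 + 4692969/2000 * n + 14078907/10000 * n ^ 2
          + 4692969/5000 * n ^ 3) := by
  apply Complex.ofReal_injective
  push_cast
  rw [← Complex.mul_conj']
  simp only [apolA, apolB, apolC, apolD, map_sub, map_mul, map_neg, map_add, map_pow,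
    map_natCast, map_ofNat, map_div₀, Complex.conj_ofReal, map_one, hu.conj_eq_neg_one_sub]
  grind [hu.sq_add_self_add_one, ofReal_lam_sq]

lemma mul_norm_apolC_lt_norm_apolD : 27 / 10 * ‖apolC u n‖ < ‖apolD u n‖ := by
  have hn : (0 : ℝ) ≤ n := n.cast_nonneg
  obtain ⟨hl, hl'⟩ := lam_bounds
  have h : (27 / 10 * ‖apolC u n‖) ^ 2 < ‖apolD u n‖ ^ 2 := by
    rw [mul_pow, sq_norm_apolC hu, sq_norm_apolD hu]
    nlinarith [mul_nonneg hn (sub_nonneg.mpr hl'),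
      mul_nonneg (sq_nonneg (n : ℝ)) (sub_nonneg.mpr hl)]
  exact (pow_lt_pow_iff_left₀ (by positivity) (norm_nonneg _) two_ne_zero).mp h

lemma sq_norm_apolA_lt : ‖apolA u n‖ ^ 2 < (27 / 10) ^ 2 * ‖apolC u n‖ ^ 2 := by
  have hn : (0 : ℝ) ≤ n := n.cast_nonneg
  obtain ⟨hl, hl'⟩ := lam_bounds
  rw [sq_norm_apolC hu, sq_norm_apolA hu]
  nlinarith [mul_nonneg hn (sub_nonneg.mpr hl), mul_nonneg (sq_nonneg (n : ℝ)) (sub_nonneg.mpr hl')]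

/-- In powers of `n - 2` the difference of the squares of both sides has coefficients
`a_i + b_i λ` with `b_i > 0` and `a_i + 1.73 b_i > 0`. -/
lemma le_norm_apol_cross (hn : 2 ≤ n) :
    27 / 10 * ((27 / 10) ^ 2 * ‖apolC u n‖ ^ 2 - ‖apolA u n‖ ^ 2
        + ‖apolA u n * apolD u n - apolB u n * apolC u n‖)
      ≤ ‖((27 / 10 : ℝ) : ℂ) ^ 2 * apolC u n * conj (apolD u n)
          - apolA u n * conj (apolB u n)‖ := by
  have hm : (0 : ℝ) ≤ n - 2 := by rw [sub_nonneg]; exact_mod_cast hn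
  have hδ : 0 ≤ lam - 173 / 100 := sub_nonneg.mpr lam_bounds.1
  have hα := sq_norm_apolA_lt hu n
  have h : (27 / 10 * ((27 / 10) ^ 2 * ‖apolC u n‖ ^ 2 - ‖apolA u n‖ ^ 2 + 9)) ^ 2
      ≤ ‖((27 / 10 : ℝ) : ℂ) ^ 2 * apolC u n * conj (apolD u n)
          - apolA u n * conj (apolB u n)‖ ^ 2 := by
    rw [sq_norm_apol_cross hu, sq_norm_apolC hu, sq_norm_apolA hu]
    have hl2 (k : ℕ) : lam ^ 2 * (n : ℝ) ^ k = 3 * (n : ℝ) ^ k := by rw [lam_sq]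
    nlinarith [hl2 0, hl2 1, hl2 2, hl2 3, hl2 4, pow_nonneg hm 2, pow_nonneg hm 3,
      pow_nonneg hm 4, mul_nonneg hδ hm, mul_nonneg hδ (pow_nonneg hm 2),
      mul_nonneg hδ (pow_nonneg hm 3), mul_nonneg hδ (pow_nonneg hm 4)]
  rw [apol_det, norm_mul, Complex.norm_ofNat, hu.norm'_eq_one (by norm_num), mul_one]
  exact (pow_le_pow_iff_left₀ (by nlinarith) (norm_nonneg _) two_ne_zero).mp h

end CubeRoot

lemma phi_eq (k n : ℕ) {z : ℂ} (hz : z ∈ closedBall (0 : ℂ) (27 / 10)) :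
    phi k n z = exp (thetaB k * I) *
      ((apolA (exp (thetaA k * I)) n * z + apolB (exp (thetaA k * I)) n)
        / (apolC (exp (thetaA k * I)) n * z + apolD (exp (thetaA k * I)) n)) := by
  set u := exp (thetaA k * I)
  have hu := isPrimitiveRoot_exp_thetaA k
  rw [mem_closedBall_zero_iff] at hz
  have hq : -z + lam + 1 ≠ 0 := by
    have h : 27 / 10 * ‖(-1 : ℂ)‖ < ‖(lam : ℂ) + 1‖ := by
      rw [norm_neg, norm_one, ← Complex.ofReal_one, ← Complex.ofReal_add, Complex.norm_real,
        Real.norm_of_nonneg (by linarith [lam_pos])]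
      linarith [lam_bounds.1]
    simpa [add_assoc] using mul_add_ne_zero_of_mul_norm_lt h hz
  have hfz : u * apolF z = u * ((lam - 1) * z + 1) / (-z + lam + 1) := mul_div_assoc' _ _ _
  have hden (j : ℕ) : -(j : ℂ) * (u * apolF z) + lam + j
      = (apolC u j * z + apolD u j) / (-z + lam + 1) := by
    rw [hfz, apolC, apolD]
    field_simp
    ring
  have hnum : ((lam : ℂ) - n) * (u * apolF z) + n
      = (apolA u n * z + apolB u n) / (-z + lam + 1) := by
    rw [hfz, apolA, apolB]
    field_simp
    ring
  have hpole (j : ℕ) : apolC u j * z + apolD u j ≠ 0 :=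
    mul_add_ne_zero_of_mul_norm_lt (mul_norm_apolC_lt_norm_apolD hu j) hz
  change exp (thetaB k * I) * apolF^[n] (u * apolF z) = _
  rw [apolF_iterate fun j _ => by rw [hden]; exact div_ne_zero (hpole j) hq, hnum, hden,
    div_div_div_cancel_right₀ hq]

lemma isMobiusOn_phi (k n : ℕ) : IsMobiusOn (closedBall 0 (27 / 10)) (phi k n) := by
  set u := exp (thetaA k * I)
  have hu := isPrimitiveRoot_exp_thetaA k
  refine ⟨exp (thetaB k * I) * apolA u n, exp (thetaB k * I) * apolB u n, apolC u n, apolD u n,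
    ?_, fun z hz => ⟨?_, by rw [phi_eq k n hz]; ring⟩⟩
  · rw [mul_assoc, mul_assoc, ← mul_sub, apol_det]
    exact mul_ne_zero (exp_ne_zero _) (mul_ne_zero (by norm_num) (hu.ne_zero (by norm_num)))
  · exact mul_add_ne_zero_of_mul_norm_lt (mul_norm_apolC_lt_norm_apolD hu n)
      (mem_closedBall_zero_iff.mp hz)

lemma mapsTo_phi (k : ℕ) {n : ℕ} (hn : 2 ≤ n) :
    MapsTo (phi k n) (closedBall 0 (27 / 10)) (closedBall 0 (27 / 10)) := by
  intro z hz
  have hu := isPrimitiveRoot_exp_thetaA k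
  have hz' := mem_closedBall_zero_iff.mp hz
  rw [mem_closedBall_zero_iff, phi_eq k n hz, norm_mul, norm_exp_ofReal_mul_I, one_mul,
    norm_div, div_le_iff₀ (norm_pos_iff.mpr
      (mul_add_ne_zero_of_mul_norm_lt (mul_norm_apolC_lt_norm_apolD hu n) hz'))]
  exact norm_mul_add_le_of_hermitian (sub_pos.mpr (sq_norm_apolA_lt hu n))
    (le_norm_apol_cross hu n hn) hz'

lemma isMobiusOn_wordComp {ω : List (ℕ × ℕ)} (hω : ∀ p ∈ ω, 2 ≤ p.2) :
    IsMobiusOn (closedBall 0 (27 / 10)) (wordComp ω) ∧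
      MapsTo (wordComp ω) (closedBall 0 (27 / 10)) (closedBall 0 (27 / 10)) := by
  induction ω with
  | nil => exact ⟨isMobiusOn_id _, mapsTo_id _⟩
  | cons p ω ih =>
    obtain ⟨hmob, hmaps⟩ := ih fun q hq => hω q (List.mem_cons_of_mem p hq)
    have hp := hω p List.mem_cons_self
    exact ⟨(isMobiusOn_phi p.1 p.2).comp hmob hmaps, (mapsTo_phi p.1 hp).comp hmaps⟩

/-- For every finite word ω over I restricted to n > 1 and z, w ∈ 𝔻,
|φ'_ω(z)| ≤ 5.03661 · |φ'_ω(w)|. -/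
theorem apollonian_distortion_bound_n_gt_one (ω : List (ℕ × ℕ))
    (hω : ∀ p ∈ ω, p ∈ apolI ∧ 1 < p.2)
    (z w : ℂ) (hz : z ∈ unitD) (hw : w ∈ unitD) :
    ‖deriv (wordComp ω) z‖ ≤ 5.03661 * ‖deriv (wordComp ω) w‖ := by
  have hmob := (isMobiusOn_wordComp fun p hp => (hω p hp).2).1
  calc ‖deriv (wordComp ω) z‖
      ≤ ((27 / 10 + 1) / (27 / 10 - 1)) ^ 2 * ‖deriv (wordComp ω) w‖ :=
        hmob.norm_deriv_le (by norm_num) hz hw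
    _ ≤ 5.03661 * ‖deriv (wordComp ω) w‖ := by gcongr; norm_num
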